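/- arXiv:1910.09498 — 5 statements merged into one kernel-verified Lean document; each statement's English description precedes it below -/
import Mathlib

section
/- Let T > 0, M ≥ 0, R > 0. Let n : [0,T] × ℝ → [0,∞) be continuously differentiable with n(t,x) = 0 whenever |x| ≥ R; let W : [0,T] × ℝ → ℝ be such that ∂_x W and ∂_x² W exist and are continuous on [0,T] × ℝ; and let g : [0,T] × ℝ → ℝ be continuous with g ≤ M. If ∂_t n = (∂_x n)(∂_x W) + n ∂_x² W + n g on [0,T] × ℝ, then for every t ∈ [0,T]: ∫_ℝ n(t,x) dx ≤ e^{M t} ∫_ℝ n(0,x) dx. -/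
open MeasureTheory Set Function

/-!
Integrating the equation in `x`, the transport term `∂ₓ(n ∂ₓW)` is an exact derivative whose
flux `n ∂ₓW` vanishes at `±R`, so the mass `m(t) = ∫ n(t,x) dx` satisfies `m' = ∫ n g ≤ M m`
(using `n ≥ 0`). Differentiating under the integral sign is justified on the interior of
`[0,T]` by the `C¹` bound on the compact support, and Gronwall's argument, applied to the
nonincreasing function `e^{-Mt} m(t)`, gives the estimate.
-/

theorem ContDiffOn.contDiff_of_uncurry {𝕜 E F G : Type*} [NontriviallyNormedField 𝕜]
    [NormedAddCommGroup E] [NormedSpace 𝕜 E] [NormedAddCommGroup F] [NormedSpace 𝕜 F]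
    [NormedAddCommGroup G] [NormedSpace 𝕜 G] {k : WithTop ℕ∞} {u : E → F → G} {A : Set E}
    {t : E} (hu : ContDiffOn 𝕜 k (uncurry u) (A ×ˢ univ)) (ht : t ∈ A) :
    ContDiff 𝕜 k (u t) :=
  hu.comp_contDiff (contDiff_const.prodMk contDiff_id) fun x => ⟨ht, mem_univ x⟩

section TimeDerivative

variable {u : ℝ → ℝ → ℝ} {U : Set ℝ}

theorem ContDiffOn.hasDerivAt_fst_of_isOpen (hu : ContDiffOn ℝ 1 (uncurry u) (U ×ˢ univ))
    (hU : IsOpen U) {r : ℝ} (hr : r ∈ U) (x : ℝ) :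
    HasDerivAt (fun s => u s x) (fderiv ℝ (uncurry u) (r, x) (1, 0)) r := by
  have hdiff : DifferentiableAt ℝ (uncurry u) (r, x) :=
    (hu.contDiffAt ((hU.prod isOpen_univ).mem_nhds ⟨hr, mem_univ x⟩)).differentiableAt
      one_ne_zero
  exact hdiff.hasFDerivAt.comp_hasDerivAt r ((hasDerivAt_id r).prodMk (hasDerivAt_const r x))

theorem ContDiffOn.continuousOn_deriv_fst_of_isOpen
    (hu : ContDiffOn ℝ 1 (uncurry u) (U ×ˢ univ)) (hU : IsOpen U) :
    ContinuousOn (fun q : ℝ × ℝ => deriv (fun s => u s q.2) q.1) (U ×ˢ univ) := by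
  have hfderiv : ContinuousOn (fun q : ℝ × ℝ => fderiv ℝ (uncurry u) q (1, 0)) (U ×ˢ univ) :=
    (hu.continuousOn_fderiv_of_isOpen (hU.prod isOpen_univ) le_rfl).clm_apply continuousOn_const
  exact hfderiv.congr fun q hq => (hu.hasDerivAt_fst_of_isOpen hU hq.1 q.2).deriv

theorem ContDiffOn.continuous_deriv_fst_of_isOpen (hu : ContDiffOn ℝ 1 (uncurry u) (U ×ˢ univ))
    (hU : IsOpen U) {t : ℝ} (ht : t ∈ U) : Continuous fun x => deriv (fun s => u s x) t :=
  (hu.continuousOn_deriv_fst_of_isOpen hU).comp_continuous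
    (continuous_const.prodMk continuous_id) fun x => ⟨ht, mem_univ x⟩

theorem hasDerivAt_setIntegral_of_contDiffOn (hu : ContDiffOn ℝ 1 (uncurry u) (U ×ˢ univ))
    (hU : IsOpen U) {K : Set ℝ} (hK : IsCompact K) {t : ℝ} (ht : t ∈ U) :
    HasDerivAt (fun r => ∫ x in K, u r x) (∫ x in K, deriv (fun r => u r x) t) t := by
  obtain ⟨ε, hε, hball⟩ : ∃ ε, 0 < ε ∧ Metric.closedBall t ε ⊆ U :=
    Metric.nhds_basis_closedBall.mem_iff.1 (hU.mem_nhds ht)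
  obtain ⟨C, hC⟩ := ((isCompact_closedBall t ε).prod hK).exists_bound_of_continuousOn
    ((hu.continuousOn_deriv_fst_of_isOpen hU).mono (prod_mono hball (subset_univ K)))
  have hslice : ∀ r ∈ U, Continuous (u r) := fun r hr => (hu.contDiff_of_uncurry hr).continuous
  refine (hasDerivAt_integral_of_dominated_loc_of_deriv_le (bound := fun _ => C)
    (F' := fun r x => deriv (fun s => u s x) r)
    (Metric.closedBall_mem_nhds t hε) ?_ ((hslice t ht).continuousOn.integrableOn_compact hK)
    (hu.continuous_deriv_fst_of_isOpen hU ht).aestronglyMeasurable ?_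
    (integrableOn_const hK.measure_ne_top) ?_).2
  · filter_upwards [hU.mem_nhds ht] with r hr using (hslice r hr).aestronglyMeasurable
  · filter_upwards [ae_restrict_mem hK.measurableSet] with x hx r hr using hC (r, x) ⟨hr, hx⟩
  · filter_upwards with x r hr
    exact (hu.hasDerivAt_fst_of_isOpen hU (hball hr) x).differentiableAt.hasDerivAt

end TimeDerivative

theorem setIntegral_le_mul_setIntegral_of_le_deriv_add_mul {P P' v w : ℝ → ℝ} {a b M : ℝ}
    (hab : a ≤ b) (hPcont : ContinuousOn P (Icc a b))
    (hP : ∀ x ∈ Ioo a b, HasDerivAt P (P' x) x) (hPab : P b ≤ P a)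
    (hv : IntegrableOn v (Icc a b)) (hw : IntegrableOn w (Icc a b))
    (hle : ∀ x ∈ Ioo a b, v x ≤ P' x + M * w x) :
    ∫ x in Icc a b, v x ≤ M * ∫ x in Icc a b, w x := by
  have hflux : ∫ x in a..b, (v x - M * w x) ≤ P b - P a :=
    intervalIntegral.integral_le_sub_of_hasDeriv_right_of_le hab hPcont
      (fun x hx => (hP x hx).hasDerivWithinAt) (hv.sub (hw.const_mul M))
      fun x hx => by linarith [hle x hx]
  rw [intervalIntegral.integral_of_le hab, ← integral_Icc_eq_integral_Ioc,
    integral_sub hv (hw.const_mul M), integral_const_mul] at hflux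
  linarith

theorem setIntegral_le_mul_setIntegral_of_transport_growth {ρ ρt V G : ℝ → ℝ} {a b M : ℝ}
    (hab : a ≤ b) (hρ : Differentiable ℝ ρ) (hV : Differentiable ℝ V) (ha : ρ a = 0)
    (hb : ρ b = 0) (hρt : IntegrableOn ρt (Icc a b)) (hρ_nonneg : ∀ x ∈ Ioo a b, 0 ≤ ρ x)
    (hG : ∀ x ∈ Ioo a b, G x ≤ M)
    (heq : ∀ x ∈ Ioo a b, ρt x = deriv ρ x * V x + ρ x * deriv V x + ρ x * G x) :
    ∫ x in Icc a b, ρt x ≤ M * ∫ x in Icc a b, ρ x := by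
  have hflux : ∀ x, HasDerivAt (fun y => ρ y * V y) (deriv ρ x * V x + ρ x * deriv V x) x :=
    fun x => (hρ x).hasDerivAt.mul (hV x).hasDerivAt
  refine setIntegral_le_mul_setIntegral_of_le_deriv_add_mul hab
    (fun x _ => (hflux x).continuousAt.continuousWithinAt) (fun x _ => hflux x)
    (by simp [ha, hb]) hρt hρ.continuous.integrableOn_Icc fun x hx => ?_
  rw [heq x hx]
  linarith [mul_le_mul_of_nonneg_left (hG x hx) (hρ_nonneg x hx)]

theorem le_exp_mul_of_hasDerivAt_le_mul {F F' : ℝ → ℝ} {a b K : ℝ}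
    (hF : ContinuousOn F (Icc a b)) (hF' : ∀ t ∈ Ioo a b, HasDerivAt F (F' t) t)
    (hle : ∀ t ∈ Ioo a b, F' t ≤ K * F t) :
    ∀ t ∈ Icc a b, F t ≤ Real.exp (K * (t - a)) * F a := by
  have hdamped : ∀ t ∈ Ioo a b, HasDerivAt (fun s => Real.exp (-K * s) * F s)
      (Real.exp (-K * t) * (F' t - K * F t)) t := by
    intro t ht
    have hexp : HasDerivAt (fun s => Real.exp (-K * s)) (Real.exp (-K * t) * -K) t := by
      simpa using ((hasDerivAt_id t).const_mul (-K)).exp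
    exact (hexp.fun_mul (hF' t ht)).congr_deriv (by ring)
  have hanti : AntitoneOn (fun s => Real.exp (-K * s) * F s) (Icc a b) := by
    refine antitoneOn_of_hasDerivWithinAt_nonpos
      (f' := fun t => Real.exp (-K * t) * (F' t - K * F t)) (convex_Icc a b)
      ((Real.continuous_exp.comp (continuous_const.mul continuous_id)).continuousOn.mul hF)
      (fun t ht => ?_) fun t ht => ?_
    · rw [interior_Icc] at ht ⊢
      exact (hdamped t ht).hasDerivWithinAt
    · rw [interior_Icc] at ht
      exact mul_nonpos_of_nonneg_of_nonpos (Real.exp_pos _).le (by linarith [hle t ht])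
  intro t ht
  have hmono := hanti (left_mem_Icc.2 (ht.1.trans ht.2)) ht ht.1
  calc F t = Real.exp (K * t) * (Real.exp (-K * t) * F t) := by
        rw [← mul_assoc, ← Real.exp_add, neg_mul, add_neg_cancel, Real.exp_zero, one_mul]
    _ ≤ Real.exp (K * t) * (Real.exp (-K * a) * F a) := by gcongr
    _ = Real.exp (K * (t - a)) * F a := by
        rw [← mul_assoc, ← Real.exp_add]; ring_nf

theorem mass_growth_estimate_general (T M R : ℝ) (hR : 0 < R)
    (n W g : ℝ → ℝ → ℝ)
    (hn : ContDiffOn ℝ 1 (Function.uncurry n) (Icc 0 T ×ˢ (univ : Set ℝ)))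
    (hnpos : ∀ t ∈ Icc (0 : ℝ) T, ∀ x : ℝ, 0 ≤ n t x)
    (hnsupp : ∀ t ∈ Icc (0 : ℝ) T, ∀ x : ℝ, R ≤ |x| → n t x = 0)
    (hWxx : ∀ t ∈ Icc (0 : ℝ) T, ∀ x : ℝ, DifferentiableAt ℝ (deriv (W t)) x)
    (hgM : ∀ t ∈ Icc (0 : ℝ) T, ∀ x : ℝ, g t x ≤ M)
    (hpde : ∀ t ∈ Icc (0 : ℝ) T, ∀ x : ℝ,
      derivWithin (fun s : ℝ => n s x) (Icc 0 T) t
        = deriv (n t) x * deriv (W t) x + n t x * deriv (deriv (W t)) x + n t x * g t x) :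
    ∀ t ∈ Icc (0 : ℝ) T, (∫ x : ℝ, n t x) ≤ Real.exp (M * t) * ∫ x : ℝ, n 0 x := by
  set K := Icc (-R) R
  have hvanish : ∀ t ∈ Icc (0 : ℝ) T, ∀ x ∉ K, n t x = 0 := fun t ht x hx =>
    hnsupp t ht x (le_abs.2 (by by_contra! h; exact hx ⟨by linarith, h.1.le⟩))
  have hmass : ∀ t ∈ Icc (0 : ℝ) T, ∫ x in K, n t x = ∫ x, n t x := fun t ht =>
    setIntegral_eq_integral_of_forall_compl_eq_zero (hvanish t ht)
  have hn_interior : ContDiffOn ℝ 1 (uncurry n) (Ioo 0 T ×ˢ univ) :=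
    hn.mono (prod_mono Ioo_subset_Icc_self subset_rfl)
  have hderiv : ∀ t ∈ Ioo (0 : ℝ) T,
      HasDerivAt (fun s => ∫ x, n s x) (∫ x in K, deriv (fun s => n s x) t) t := fun t ht =>
    HasDerivAt.congr_of_eventuallyEq
      (hasDerivAt_setIntegral_of_contDiffOn hn_interior isOpen_Ioo isCompact_Icc ht)
      (Filter.eventually_of_mem (isOpen_Ioo.mem_nhds ht) fun s hs =>
        (hmass s (Ioo_subset_Icc_self hs)).symm)
  have hgrowth : ∀ t ∈ Ioo (0 : ℝ) T, ∫ x in K, deriv (fun s => n s x) t ≤ M * ∫ x, n t x := by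
    intro t ht
    have htIcc : t ∈ Icc 0 T := Ioo_subset_Icc_self ht
    rw [← hmass t htIcc]
    refine setIntegral_le_mul_setIntegral_of_transport_growth (by linarith)
      ((hn.contDiff_of_uncurry htIcc).differentiable one_ne_zero) (hWxx t htIcc)
      (hnsupp t htIcc _ ((le_abs_self R).trans (abs_neg R).ge))
      (hnsupp t htIcc R (le_abs_self R))
      (hn_interior.continuous_deriv_fst_of_isOpen isOpen_Ioo ht).integrableOn_Icc
      (fun x _ => hnpos t htIcc x) (fun x _ => hgM t htIcc x) fun x _ => ?_
    rw [← derivWithin_of_mem_nhds (Icc_mem_nhds ht.1 ht.2), hpde t htIcc x]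
  intro t ht
  simpa using le_exp_mul_of_hasDerivAt_le_mul
    (continuousOn_integral_of_compact_support isCompact_Icc hn.continuousOn
      fun t x ht hx => hvanish t ht x hx) hderiv hgrowth t ht

/-- conditional mass estimate for classical solutions of the
transport–growth equation `∂_t n = (∂_x n)(∂_x W) + n ∂_x² W + n g` on `[0,T] × ℝ`,
with `n ≥ 0` compactly supported in space and growth term `g ≤ M`:
`∫ n(t) dx ≤ e^{Mt} ∫ n(0) dx` for all `t ∈ [0,T]`. -/
theorem mass_growth_estimate (T M R : ℝ) (hT : 0 < T) (hM : 0 ≤ M) (hR : 0 < R)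
    (n W g : ℝ → ℝ → ℝ)
    (hn : ContDiffOn ℝ 1 (Function.uncurry n) (Icc 0 T ×ˢ (univ : Set ℝ)))
    (hnpos : ∀ t ∈ Icc (0 : ℝ) T, ∀ x : ℝ, 0 ≤ n t x)
    (hnsupp : ∀ t ∈ Icc (0 : ℝ) T, ∀ x : ℝ, R ≤ |x| → n t x = 0)
    (hWx : ∀ t ∈ Icc (0 : ℝ) T, ∀ x : ℝ, DifferentiableAt ℝ (W t) x)
    (hWxx : ∀ t ∈ Icc (0 : ℝ) T, ∀ x : ℝ, DifferentiableAt ℝ (deriv (W t)) x)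
    (hWxcont : ContinuousOn (fun q : ℝ × ℝ => deriv (W q.1) q.2)
      (Icc 0 T ×ˢ (univ : Set ℝ)))
    (hWxxcont : ContinuousOn (fun q : ℝ × ℝ => deriv (deriv (W q.1)) q.2)
      (Icc 0 T ×ˢ (univ : Set ℝ)))
    (hgcont : ContinuousOn (Function.uncurry g) (Icc 0 T ×ˢ (univ : Set ℝ)))
    (hgM : ∀ t ∈ Icc (0 : ℝ) T, ∀ x : ℝ, g t x ≤ M)
    (hpde : ∀ t ∈ Icc (0 : ℝ) T, ∀ x : ℝ,
      derivWithin (fun s : ℝ => n s x) (Icc 0 T) t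
        = deriv (n t) x * deriv (W t) x + n t x * deriv (deriv (W t)) x + n t x * g t x) :
    ∀ t ∈ Icc (0 : ℝ) T, (∫ x : ℝ, n t x) ≤ Real.exp (M * t) * ∫ x : ℝ, n 0 x :=
  mass_growth_estimate_general T M R hR n W g hn hnpos hnsupp hWxx hgM hpde
end

section
/- Let ν > 0, T > 0, an integer k ≥ 2, and functions G¹, G² : ℝ → ℝ be given. Let n¹, n² : (0,T) × ℝ → [0,∞) be continuously differentiable and let W : (0,T) × ℝ → ℝ be twice continuously differentiable in x with ∂_x W continuous. Set n = n¹ + n² and p = (k/(k−1)) n^{k−1}, and suppose that for i = 1,2: ∂_t nⁱ = (∂_x nⁱ)(∂_x W) + nⁱ ∂_x² W + nⁱ Gⁱ(p), and that −ν ∂_x² W + W = p on (0,T) × ℝ. Then at every point (t,x) with n(t,x) > 0, setting r = n¹/n, the pressure equation holds: ∂_t p − (∂_x p)(∂_x W) = ((k−1)/ν) p [ W − p + ν r G¹(p) + ν (1 − r) G²(p) ]. -/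
open Set

/-- derivation of the pressure equation. For classical solutions of the
two-species system `∂_t nⁱ = (∂_x nⁱ)(∂_x W) + nⁱ ∂_x² W + nⁱ Gⁱ(p)` coupled through
Brinkman's law `−ν ∂_x² W + W = p`, with `p = (k/(k−1))(n¹+n²)^{k−1}`, at every point of
`(0,T) × ℝ` where `n = n¹ + n² > 0` the pressure satisfies
`∂_t p − (∂_x p)(∂_x W) = ((k−1)/ν) p [W − p + ν r G¹(p) + ν (1−r) G²(p)]`
with `r = n¹/n`. -/
theorem pressure_equation (ν T : ℝ) (hν : 0 < ν) (hT : 0 < T) (k : ℕ) (hk : 2 ≤ k)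
    (G₁ G₂ : ℝ → ℝ) (n₁ n₂ W : ℝ → ℝ → ℝ) (p : ℝ → ℝ → ℝ)
    (hp : ∀ t x : ℝ, p t x = (k : ℝ) / ((k : ℝ) - 1) * (n₁ t x + n₂ t x) ^ (k - 1))
    (hn₁pos : ∀ t ∈ Ioo (0 : ℝ) T, ∀ x : ℝ, 0 ≤ n₁ t x)
    (hn₂pos : ∀ t ∈ Ioo (0 : ℝ) T, ∀ x : ℝ, 0 ≤ n₂ t x)
    (hn₁cont : Continuous (Function.uncurry n₁))
    (hn₂cont : Continuous (Function.uncurry n₂))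
    (hn₁x : ∀ t ∈ Ioo (0 : ℝ) T, ∀ x : ℝ, DifferentiableAt ℝ (n₁ t) x)
    (hn₂x : ∀ t ∈ Ioo (0 : ℝ) T, ∀ x : ℝ, DifferentiableAt ℝ (n₂ t) x)
    (hW2 : ∀ t ∈ Ioo (0 : ℝ) T, ContDiff ℝ 2 (W t))
    (hWxcont : ∀ t ∈ Ioo (0 : ℝ) T, Continuous (deriv (W t)))
    (hpde₁ : ∀ t ∈ Ioo (0 : ℝ) T, ∀ x : ℝ,
      HasDerivAt (fun s : ℝ => n₁ s x)
        (deriv (n₁ t) x * deriv (W t) x + n₁ t x * deriv (deriv (W t)) x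
          + n₁ t x * G₁ (p t x)) t)
    (hpde₂ : ∀ t ∈ Ioo (0 : ℝ) T, ∀ x : ℝ,
      HasDerivAt (fun s : ℝ => n₂ s x)
        (deriv (n₂ t) x * deriv (W t) x + n₂ t x * deriv (deriv (W t)) x
          + n₂ t x * G₂ (p t x)) t)
    (hbrinkman : ∀ t ∈ Ioo (0 : ℝ) T, ∀ x : ℝ,
      -ν * deriv (deriv (W t)) x + W t x = p t x) :
    ∀ t ∈ Ioo (0 : ℝ) T, ∀ x : ℝ, 0 < n₁ t x + n₂ t x →
      ∃ pt px : ℝ,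
        HasDerivAt (fun s : ℝ => p s x) pt t ∧
        HasDerivAt (fun y : ℝ => p t y) px x ∧
        pt - px * deriv (W t) x
          = ((k : ℝ) - 1) / ν * p t x *
              (W t x - p t x
                + ν * (n₁ t x / (n₁ t x + n₂ t x)) * G₁ (p t x)
                + ν * (1 - n₁ t x / (n₁ t x + n₂ t x)) * G₂ (p t x)) := by
  intro t ht x hN
  have hA := hpde₁ t ht x
  have hB := hpde₂ t ht x
  have hnt := hA.add hB
  have hnx := ((hn₁x t ht x).hasDerivAt).add ((hn₂x t ht x).hasDerivAt)
  have hk1 : (1:ℕ) ≤ k := by omega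
  have hcast : ((k - 1 : ℕ) : ℝ) = (k:ℝ) - 1 := by
    rw [Nat.cast_sub hk1]; norm_num
  set c : ℝ := (k:ℝ) / ((k:ℝ) - 1) with hc
  have hft : (fun s : ℝ => p s x) = fun s : ℝ => c * (n₁ s x + n₂ s x) ^ (k-1) :=
    funext fun s => hp s x
  have hfx : (fun y : ℝ => p t y) = fun y : ℝ => c * (n₁ t y + n₂ t y) ^ (k-1) :=
    funext fun y => hp t y
  have hpt : HasDerivAt (fun s : ℝ => p s x)
      (c * (((k-1:ℕ):ℝ) * (n₁ t x + n₂ t x) ^ (k-1-1) *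
        (deriv (n₁ t) x * deriv (W t) x + n₁ t x * deriv (deriv (W t)) x
          + n₁ t x * G₁ (p t x)
          + (deriv (n₂ t) x * deriv (W t) x + n₂ t x * deriv (deriv (W t)) x
          + n₂ t x * G₂ (p t x))))) t := by
    rw [hft]; exact (hnt.pow (k-1)).const_mul c
  have hpx : HasDerivAt (fun y : ℝ => p t y)
      (c * (((k-1:ℕ):ℝ) * (n₁ t x + n₂ t x) ^ (k-1-1) *
        (deriv (n₁ t) x + deriv (n₂ t) x))) x := by
    rw [hfx]; exact (hnx.pow (k-1)).const_mul c
  refine ⟨_, _, hpt, hpx, ?_⟩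
  have hbr := hbrinkman t ht x
  have hW : W t x = p t x + ν * deriv (deriv (W t)) x := by linarith
  have hN0 : n₁ t x + n₂ t x ≠ 0 := ne_of_gt hN
  have hν0 : ν ≠ 0 := ne_of_gt hν
  have hkR : (k:ℝ) - 1 ≠ 0 := by
    have : (2:ℝ) ≤ (k:ℝ) := by exact_mod_cast hk
    linarith
  have hpow : (n₁ t x + n₂ t x) ^ (k-1) = (n₁ t x + n₂ t x) ^ (k-1-1) * (n₁ t x + n₂ t x) := by
    rw [← pow_succ]; congr 1; omega
  rw [hW, hp t x, hcast, hpow]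
  field_simp
  ring
end

section
/- For every p_M > 0, the quantity sup_{z ∈ [0, p_M]} √z · |1 − z^{1/(k−1)}| tends to 0 as the integer k ≥ 2 tends to infinity. -/
open Filter

lemma pointwise_sqrt_rpow_bound (c : ℝ) (hc : 1 ≤ c) (ε : ℝ) (hε : 0 < ε)
    (z : ℝ) (hz : 0 ≤ z) (hzc : z ≤ c) :
    Real.sqrt z * |1 - z ^ ε| ≤ 2 * ε + Real.sqrt c * (c ^ ε - 1) := by
  have hc0 : (0:ℝ) < c := lt_of_lt_of_le one_pos hc
  have hce : 1 ≤ c ^ ε := Real.one_le_rpow hc hε.le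
  have hterm2 : 0 ≤ Real.sqrt c * (c ^ ε - 1) :=
    mul_nonneg (Real.sqrt_nonneg c) (by linarith)
  rcases eq_or_lt_of_le hz with h0 | hz0
  · rw [← h0, Real.sqrt_zero, zero_mul]
    linarith
  rcases le_total z 1 with hz1 | hz1
  · -- case 0 < z ≤ 1
    have hzε : z ^ ε ≤ 1 := Real.rpow_le_one hz hz1 hε.le
    rw [abs_of_nonneg (by linarith)]
    set s := Real.sqrt z with hs
    have hs0 : 0 < s := Real.sqrt_pos.mpr hz0
    have hss : s * s = z := Real.mul_self_sqrt hz
    -- 1 - z^ε ≤ -(ε * log z)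
    have hexp : ε * Real.log z + 1 ≤ z ^ ε := by
      rw [Real.rpow_def_of_pos hz0, mul_comm]
      exact Real.add_one_le_exp _
    -- -log z ≤ 2 * (1 / s) - 2
    have hlog : Real.log (1 / s) ≤ 1 / s - 1 :=
      Real.log_le_sub_one_of_pos (by positivity)
    have hlogs : Real.log s = Real.log z / 2 := Real.log_sqrt hz
    rw [Real.log_div one_ne_zero hs0.ne', Real.log_one, hlogs] at hlog
    -- so -log z ≤ 2/s - 2
    have hlz : -Real.log z ≤ 2 * (1 / s) - 2 := by linarith
    have key : s * (1 - z ^ ε) ≤ 2 * ε := by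
      have h1 : s * (1 - z ^ ε) ≤ s * (ε * (-Real.log z)) := by
        apply mul_le_mul_of_nonneg_left _ hs0.le
        nlinarith
      have h2 : s * (ε * (-Real.log z)) ≤ s * (ε * (2 * (1 / s) - 2)) := by
        apply mul_le_mul_of_nonneg_left _ hs0.le
        exact mul_le_mul_of_nonneg_left hlz hε.le
      have h3 : s * (ε * (2 * (1 / s) - 2)) = 2 * ε - 2 * ε * s := by
        field_simp
      nlinarith
    linarith
  · -- case 1 ≤ z ≤ c
    have hzε : 1 ≤ z ^ ε := Real.one_le_rpow hz1 hε.le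
    rw [abs_of_nonpos (by linarith), neg_sub]
    have h1 : Real.sqrt z ≤ Real.sqrt c := Real.sqrt_le_sqrt hzc
    have h2 : z ^ ε ≤ c ^ ε := Real.rpow_le_rpow hz hzc hε.le
    have : Real.sqrt z * (z ^ ε - 1) ≤ Real.sqrt c * (c ^ ε - 1) :=
      mul_le_mul h1 (by linarith) (by linarith) (Real.sqrt_nonneg c)
    linarith

/-- for every `p_M > 0`, the quantity
`sup_{z ∈ [0, p_M]} √z · |1 − z^{1/(k−1)}|` tends to `0` as `k → ∞`. -/
theorem sup_sqrt_rpow_tendsto_zero (pM : ℝ) (hpM : 0 < pM) :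
    Tendsto
      (fun k : ℕ =>
        sSup ((fun z : ℝ => Real.sqrt z * |1 - z ^ (((k : ℝ) - 1)⁻¹)|) '' Set.Icc 0 pM))
      atTop (nhds 0) := by
  set c : ℝ := max pM 1 with hc
  have hc1 : 1 ≤ c := le_max_right _ _
  have hc0 : (0:ℝ) < c := lt_of_lt_of_le one_pos hc1
  set t : ℕ → ℝ := fun k => ((k : ℝ) - 1)⁻¹ with htdef
  set B : ℕ → ℝ := fun k => 2 * t k + Real.sqrt c * (c ^ t k - 1) with hB
  have ht : Tendsto t atTop (nhds 0) := by
    apply tendsto_inv_atTop_zero.comp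
    exact tendsto_atTop_add_const_right _ _ tendsto_natCast_atTop_atTop
  have hBt : Tendsto B atTop (nhds 0) := by
    have h1 : Tendsto (fun k => 2 * t k) atTop (nhds (2 * 0)) := ht.const_mul 2
    have h2 : Tendsto (fun k => Real.sqrt c * (c ^ t k - 1)) atTop
        (nhds (Real.sqrt c * (c ^ (0:ℝ) - 1))) :=
      ((tendsto_const_nhds.rpow ht (Or.inl hc0.ne')).sub tendsto_const_nhds).const_mul _
    have := h1.add h2
    simpa using this
  apply tendsto_of_tendsto_of_tendsto_of_le_of_le' tendsto_const_nhds hBt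
  · filter_upwards with k
    apply Real.sSup_nonneg
    rintro x ⟨z, hz, rfl⟩
    positivity
  · filter_upwards [eventually_ge_atTop 2] with k hk
    have hεpos : 0 < t k := by
      have : (2:ℝ) ≤ (k:ℝ) := by exact_mod_cast hk
      have : (0:ℝ) < (k:ℝ) - 1 := by linarith
      exact inv_pos.mpr this
    have hce : 1 ≤ c ^ t k := Real.one_le_rpow hc1 hεpos.le
    apply Real.sSup_le
    · rintro x ⟨z, hz, rfl⟩
      exact pointwise_sqrt_rpow_bound c hc1 (t k) hεpos z hz.1
        (le_trans hz.2 (le_max_left _ _))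
    · have : 0 ≤ Real.sqrt c * (c ^ t k - 1) :=
        mul_nonneg (Real.sqrt_nonneg c) (by linarith)
      simp only [hB]
      linarith
end

section
/- Let (Ω, μ) be a measure space, p_M > 0 and C ≥ 0. For each integer k ≥ 2 let p_k : Ω → ℝ be measurable with 0 ≤ p_k ≤ p_M μ-almost everywhere and ∫_Ω p_k dμ ≤ C. Suppose that p_k → p weakly in L²(μ) and that the functions p_k^{k/(k−1)} converge strongly in L²(μ) to some function χ as k → ∞. Then χ = p μ-almost everywhere and p_k → p strongly in L²(μ). -/
/-! For `α ∈ [1, 2]` and `0 ≤ x ≤ p_M` one has `|x ^ α - x| ≤ max 1 p_M * x`, and by compactness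
of `[0, p_M]` the powers `x ^ α` converge to `x` uniformly as `α → 1`. Bounding one factor of
`(p_k ^ α_k - p_k)²` uniformly and the other by `p_k`, the `L¹` bound gives
`‖p_k ^ (k/(k-1)) - p_k‖₂ → 0`, so `p_k → χ` strongly in `L²`. A strong limit is also the weak
limit, hence `χ = p` a.e. and `p_k → p` strongly. -/

open MeasureTheory Filter Set Topology
open scoped RealInnerProductSpace

theorem tendstoUniformlyOn_rpow_nhds {K : Set ℝ} (hK : IsCompact K) {α₀ : ℝ} (hα₀ : 0 < α₀) :
    TendstoUniformlyOn (fun α x : ℝ => x ^ α) (fun x => x ^ α₀) (𝓝 α₀) K := by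
  have hcont : ContinuousOn (Function.uncurry fun α x : ℝ => x ^ α) (Ioi 0 ×ˢ K) := fun z hz =>
    (continuousAt_snd.rpow continuousAt_fst (Or.inr hz.1)).continuousWithinAt
  intro u hu
  obtain ⟨v, hv, hvu⟩ := hK.mem_uniformity_of_prod hcont hα₀ (symm_le_uniformity hu)
  rw [nhdsWithin_eq_nhds.2 (Ioi_mem_nhds hα₀)] at hv
  exact Filter.mem_of_superset hv fun α hα x hx => hvu α hα x hx

theorem rpow_le_max_one_mul_self {x a α : ℝ} (hx : x ∈ Icc 0 a) (hα : α ∈ Icc 1 2) :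
    x ^ α ≤ max 1 a * x := by
  obtain ⟨hx₀, hxa⟩ := hx
  rcases hx₀.eq_or_lt with rfl | hx₀
  · simp [Real.zero_rpow (by linarith [hα.1] : α ≠ 0)]
  have hpow : x ^ (α - 1) ≤ max 1 a :=
    calc x ^ (α - 1) ≤ max 1 a ^ (α - 1) :=
          Real.rpow_le_rpow hx₀.le (hxa.trans (le_max_right _ _)) (by linarith [hα.1])
      _ ≤ max 1 a ^ (1 : ℝ) :=
          Real.rpow_le_rpow_of_exponent_le (le_max_left _ _) (by linarith [hα.2])
      _ = max 1 a := Real.rpow_one _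
  calc x ^ α = x ^ (α - 1) * x := by rw [← Real.rpow_add_one hx₀.ne', sub_add_cancel]
    _ ≤ max 1 a * x := by gcongr

theorem abs_rpow_sub_self_le {x a α : ℝ} (hx : x ∈ Icc 0 a) (hα : α ∈ Icc 1 2) :
    |x ^ α - x| ≤ max 1 a * x :=
  abs_sub_le_of_nonneg_of_le (Real.rpow_nonneg hx.1 α) (rpow_le_max_one_mul_self hx hα)
    hx.1 (le_mul_of_one_le_left hx.1 (le_max_left _ _))

theorem mem_Icc_div_sub_one {x : ℝ} (hx : 2 ≤ x) : x / (x - 1) ∈ Icc 1 2 := by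
  have hx₁ : 0 < x - 1 := by linarith
  constructor
  · rw [le_div_iff₀ hx₁]; linarith
  · rw [div_le_iff₀ hx₁]; linarith

theorem tendsto_div_sub_one_atTop : Tendsto (fun x : ℝ => x / (x - 1)) atTop (𝓝 1) := by
  have h : Tendsto (fun x : ℝ => 1 + (x - 1)⁻¹) atTop (𝓝 (1 + 0)) :=
    tendsto_const_nhds.add <|
      tendsto_inv_atTop_zero.comp (tendsto_atTop_add_const_right _ _ tendsto_id)
  rw [add_zero] at h
  refine h.congr' ?_
  filter_upwards [eventually_gt_atTop 1] with x hx
  field_simp [(by linarith : x - 1 ≠ 0)]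
  ring

theorem eq_of_tendsto_of_tendsto_inner {𝕜 E ι : Type*} [RCLike 𝕜] [NormedAddCommGroup E]
    [InnerProductSpace 𝕜 E] {l : Filter ι} [l.NeBot] {u : ι → E} {x y : E}
    (hu : Tendsto u l (𝓝 x))
    (hy : Tendsto (fun i => inner 𝕜 (u i) (x - y)) l (𝓝 (inner 𝕜 y (x - y)))) :
    x = y := by
  have hx : inner 𝕜 x (x - y) = inner 𝕜 y (x - y) :=
    tendsto_nhds_unique (hu.inner tendsto_const_nhds) hy
  rw [← sub_eq_zero, ← inner_self_eq_zero (𝕜 := 𝕜), inner_sub_left, hx, sub_self]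

section

variable {Ω : Type*} [MeasurableSpace Ω] {μ : Measure Ω}

theorem memLp_two_of_integrable_of_abs_le {f : Ω → ℝ} {a : ℝ} (hf : Integrable f μ)
    (hfa : ∀ᵐ ω ∂μ, |f ω| ≤ a) : MemLp f 2 μ := by
  refine (memLp_two_iff_integrable_sq hf.1).2 ((hf.norm.const_mul a).mono' (hf.1.pow 2) ?_)
  filter_upwards [hfa] with ω hω
  rw [Real.norm_eq_abs, abs_pow, sq, Real.norm_eq_abs]
  exact mul_le_mul_of_nonneg_right hω (abs_nonneg _)

theorem MeasureTheory.MemLp.rpow_of_ae_mem_Icc {q : ENNReal} {f : Ω → ℝ} {a α : ℝ}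
    (hf : MemLp f q μ) (hfa : ∀ᵐ ω ∂μ, f ω ∈ Icc 0 a) (hα : α ∈ Icc 1 2) :
    MemLp (fun ω => f ω ^ α) q μ :=
  hf.of_le_mul (hf.1.aemeasurable.pow_const α).aestronglyMeasurable
    (hfa.mono fun ω hω => by
      rw [Real.norm_eq_abs, Real.norm_eq_abs, abs_of_nonneg hω.1,
        abs_of_nonneg (Real.rpow_nonneg hω.1 _)]
      exact rpow_le_max_one_mul_self hω hα)

theorem integral_sq_le_of_abs_le {f d : Ω → ℝ} {ε c : ℝ} (hf : Integrable f μ)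
    (hd : AEStronglyMeasurable d μ) (hdε : ∀ᵐ ω ∂μ, |d ω| ≤ ε)
    (hdf : ∀ᵐ ω ∂μ, |d ω| ≤ c * f ω) : ∫ ω, d ω ^ 2 ∂μ ≤ ε * c * ∫ ω, f ω ∂μ := by
  have hpt : ∀ᵐ ω ∂μ, d ω ^ 2 ≤ ε * c * f ω := by
    filter_upwards [hdε, hdf] with ω hε hc
    rw [← sq_abs, sq, mul_assoc]
    exact mul_le_mul hε hc (abs_nonneg _) ((abs_nonneg _).trans hε)
  rw [← integral_const_mul]
  refine integral_mono_ae ((hf.const_mul (ε * c)).mono' (hd.pow 2) ?_) (hf.const_mul _) hpt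
  filter_upwards [hpt] with ω hω
  rwa [Real.norm_eq_abs, abs_of_nonneg (sq_nonneg _)]

theorem tendsto_integral_sq_of_abs_le_mul {ι : Type*} {l : Filter ι} {f d : ι → Ω → ℝ}
    {c C : ℝ} (hc : 0 ≤ c) (hf : ∀ i, Integrable (f i) μ) (hd : ∀ i, AEStronglyMeasurable (d i) μ)
    (hfC : ∀ i, ∫ ω, f i ω ∂μ ≤ C) (hdf : ∀ i, ∀ᵐ ω ∂μ, |d i ω| ≤ c * f i ω)
    (hdε : ∀ ε > 0, ∀ᶠ i in l, ∀ᵐ ω ∂μ, |d i ω| ≤ ε) :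
    Tendsto (fun i => ∫ ω, d i ω ^ 2 ∂μ) l (𝓝 0) := by
  refine tendsto_order.2 ⟨fun b hb => Eventually.of_forall fun i =>
    hb.trans_le (integral_nonneg fun ω => sq_nonneg _), fun b hb => ?_⟩
  have hK : 0 < c * |C| + 1 := by positivity
  filter_upwards [hdε (b / (c * |C| + 1)) (by positivity)] with i hi
  calc ∫ ω, d i ω ^ 2 ∂μ ≤ b / (c * |C| + 1) * c * ∫ ω, f i ω ∂μ :=
        integral_sq_le_of_abs_le (hf i) (hd i) hi (hdf i)
    _ ≤ b / (c * |C| + 1) * (c * |C|) := by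
        rw [mul_assoc]; gcongr; exact (hfC i).trans (le_abs_self C)
    _ < b := by
        rw [div_mul_eq_mul_div, div_lt_iff₀ hK]; nlinarith

theorem tendsto_integral_sq_sub_rpow {ι : Type*} {l : Filter ι} {f : ι → Ω → ℝ} {α : ι → ℝ}
    {a C : ℝ} (hf : ∀ i, Integrable (f i) μ) (hfa : ∀ i, ∀ᵐ ω ∂μ, f i ω ∈ Icc 0 a)
    (hfC : ∀ i, ∫ ω, f i ω ∂μ ≤ C) (hα : ∀ i, α i ∈ Icc 1 2) (hα₁ : Tendsto α l (𝓝 1)) :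
    Tendsto (fun i => ∫ ω, (f i ω - f i ω ^ α i) ^ 2 ∂μ) l (𝓝 0) := by
  refine tendsto_integral_sq_of_abs_le_mul (zero_le_one.trans (le_max_left 1 a)) hf
    (fun i => (hf i).1.sub ((hf i).1.aemeasurable.pow_const (α i)).aestronglyMeasurable)
    hfC (fun i => (hfa i).mono fun ω hω => ?_) fun ε hε => ?_
  · rw [abs_sub_comm]
    exact abs_rpow_sub_self_le hω (hα i)
  · filter_upwards [hα₁.eventually (Metric.tendstoUniformlyOn_iff.1
      (tendstoUniformlyOn_rpow_nhds isCompact_Icc one_pos) ε hε)] with i hi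
    filter_upwards [hfa i] with ω hω
    simpa [Real.dist_eq] using (hi _ hω).le

theorem integral_sq_sub_eq_norm_toLp_sub_sq {f g : Ω → ℝ} (hf : MemLp f 2 μ) (hg : MemLp g 2 μ) :
    ∫ ω, (f ω - g ω) ^ 2 ∂μ = ‖hf.toLp f - hg.toLp g‖ ^ 2 := by
  rw [← MemLp.toLp_sub, ← real_inner_self_eq_norm_sq, L2.inner_def]
  refine integral_congr_ae ?_
  filter_upwards [(hf.sub hg).coeFn_toLp] with ω hω
  simp [hω, sq]

theorem integral_mul_eq_inner_toLp {f g : Ω → ℝ} (hf : MemLp f 2 μ) (hg : MemLp g 2 μ) :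
    ∫ ω, f ω * g ω ∂μ = ⟪hf.toLp f, hg.toLp g⟫ := by
  rw [L2.inner_def]
  refine integral_congr_ae ?_
  filter_upwards [hf.coeFn_toLp, hg.coeFn_toLp] with ω h₁ h₂
  simp [h₁, h₂, mul_comm]

theorem tendsto_integral_sq_sub_iff {ι : Type*} {l : Filter ι} {f g : ι → Ω → ℝ}
    (hf : ∀ i, MemLp (f i) 2 μ) (hg : ∀ i, MemLp (g i) 2 μ) :
    Tendsto (fun i => ∫ ω, (f i ω - g i ω) ^ 2 ∂μ) l (𝓝 0) ↔
      Tendsto (fun i => (hf i).toLp (f i) - (hg i).toLp (g i)) l (𝓝 0) := by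
  simp only [integral_sq_sub_eq_norm_toLp_sub_sq (hf _) (hg _)]
  rw [tendsto_zero_iff_norm_tendsto_zero (f := fun i => (hf i).toLp (f i) - (hg i).toLp (g i))]
  constructor
  · intro h
    simpa [Real.sqrt_sq (norm_nonneg _)] using h.sqrt
  · intro h
    simpa using h.pow 2

theorem tendsto_integral_sq_sub_trans {ι : Type*} {l : Filter ι} {f g : ι → Ω → ℝ} {h : Ω → ℝ}
    (hf : ∀ i, MemLp (f i) 2 μ) (hg : ∀ i, MemLp (g i) 2 μ) (hh : MemLp h 2 μ)
    (hfg : Tendsto (fun i => ∫ ω, (f i ω - g i ω) ^ 2 ∂μ) l (𝓝 0))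
    (hgh : Tendsto (fun i => ∫ ω, (g i ω - h ω) ^ 2 ∂μ) l (𝓝 0)) :
    Tendsto (fun i => ∫ ω, (f i ω - h ω) ^ 2 ∂μ) l (𝓝 0) := by
  rw [tendsto_integral_sq_sub_iff hf hg] at hfg
  rw [tendsto_integral_sq_sub_iff hg (fun _ => hh)] at hgh
  rw [tendsto_integral_sq_sub_iff hf (fun _ => hh)]
  simpa using hfg.add hgh

theorem ae_eq_of_tendsto_integral_sq_sub_of_tendsto_integral_mul {ι : Type*} {l : Filter ι}
    [l.NeBot] {f : ι → Ω → ℝ} {g h : Ω → ℝ} (hf : ∀ i, MemLp (f i) 2 μ) (hg : MemLp g 2 μ)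
    (hh : MemLp h 2 μ) (hfg : Tendsto (fun i => ∫ ω, (f i ω - g ω) ^ 2 ∂μ) l (𝓝 0))
    (hweak : Tendsto (fun i => ∫ ω, f i ω * (g - h) ω ∂μ) l (𝓝 (∫ ω, h ω * (g - h) ω ∂μ))) :
    g =ᵐ[μ] h := by
  rw [tendsto_integral_sq_sub_iff hf (fun _ => hg), tendsto_sub_nhds_zero_iff] at hfg
  have hgh := hg.sub hh
  simp only [integral_mul_eq_inner_toLp (hf _) hgh, integral_mul_eq_inner_toLp hh hgh,
    MemLp.toLp_sub hg hh] at hweak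
  exact (MemLp.toLp_eq_toLp_iff hg hh).1 (eq_of_tendsto_of_tendsto_inner hfg hweak)

end

theorem pressure_strong_compactness_general {Ω : Type*} [MeasurableSpace Ω] (μ : Measure Ω)
    (pM C : ℝ)
    (p : ℕ → Ω → ℝ) (plim χ : Ω → ℝ)
    (hpbdd : ∀ k, 2 ≤ k → ∀ᵐ ω ∂μ, p k ω ∈ Set.Icc (0 : ℝ) pM)
    (hpL1 : ∀ k, 2 ≤ k → Integrable (p k) μ)
    (hpint : ∀ k, 2 ≤ k → ∫ ω, p k ω ∂μ ≤ C)
    (hplim : MemLp plim 2 μ) (hχ : MemLp χ 2 μ)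
    (hweak : ∀ g : Ω → ℝ, MemLp g 2 μ →
      Tendsto (fun k : ℕ => ∫ ω, p k ω * g ω ∂μ) atTop (nhds (∫ ω, plim ω * g ω ∂μ)))
    (hstrong : Tendsto
      (fun k : ℕ => ∫ ω, (p k ω ^ ((k : ℝ) / ((k : ℝ) - 1)) - χ ω) ^ 2 ∂μ)
      atTop (nhds 0)) :
    (∀ᵐ ω ∂μ, χ ω = plim ω) ∧
    Tendsto (fun k : ℕ => ∫ ω, (p k ω - plim ω) ^ 2 ∂μ) atTop (nhds 0) := by
  rw [← tendsto_add_atTop_iff_nat 2] at hstrong ⊢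
  have hbdd : ∀ k, ∀ᵐ ω ∂μ, p (k + 2) ω ∈ Icc 0 pM := fun k => hpbdd _ le_add_self
  have hint : ∀ k, Integrable (p (k + 2)) μ := fun k => hpL1 _ le_add_self
  have hα : ∀ k : ℕ, ((k + 2 : ℕ) : ℝ) / ((k + 2 : ℕ) - 1) ∈ Icc 1 2 := fun k =>
    mem_Icc_div_sub_one (by push_cast; linarith [k.cast_nonneg (α := ℝ)])
  have hα₁ : Tendsto (fun k : ℕ => ((k + 2 : ℕ) : ℝ) / ((k + 2 : ℕ) - 1)) atTop (𝓝 1) :=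
    tendsto_div_sub_one_atTop.comp (tendsto_natCast_atTop_atTop.comp (tendsto_add_atTop_nat 2))
  have hp : ∀ k, MemLp (p (k + 2)) 2 μ := fun k =>
    memLp_two_of_integrable_of_abs_le (hint k) <|
      (hbdd k).mono fun ω hω => (abs_of_nonneg hω.1).trans_le hω.2
  have hpχ := tendsto_integral_sq_sub_trans hp (fun k => (hp k).rpow_of_ae_mem_Icc (hbdd k) (hα k))
    hχ (tendsto_integral_sq_sub_rpow hint hbdd (fun k => hpint _ le_add_self) hα hα₁) hstrong
  have hae := ae_eq_of_tendsto_integral_sq_sub_of_tendsto_integral_mul hp hχ hplim hpχ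
    ((tendsto_add_atTop_iff_nat 2).2 (hweak _ (hχ.sub hplim)))
  exact ⟨hae, hpχ.congr fun k => integral_congr_ae (hae.mono fun ω hω => by simp [hω])⟩

/-- uniform `L¹` and `L^∞` bounds on the pressures `p_k`, weak `L²`
convergence `p_k ⇀ p`, and strong `L²` convergence of `φ_k(p_k) = p_k^{k/(k−1)}` to some `χ`
imply `χ = p` a.e. and that `p_k → p` strongly in `L²(μ)`. -/
theorem pressure_strong_compactness {Ω : Type*} [MeasurableSpace Ω] (μ : Measure Ω)
    (pM C : ℝ) (hpM : 0 < pM) (hC : 0 ≤ C)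
    (p : ℕ → Ω → ℝ) (plim χ : Ω → ℝ)
    (hpmeas : ∀ k, Measurable (p k))
    (hpbdd : ∀ k, 2 ≤ k → ∀ᵐ ω ∂μ, p k ω ∈ Set.Icc (0 : ℝ) pM)
    (hpL1 : ∀ k, 2 ≤ k → Integrable (p k) μ)
    (hpint : ∀ k, 2 ≤ k → ∫ ω, p k ω ∂μ ≤ C)
    (hplim : MemLp plim 2 μ) (hχ : MemLp χ 2 μ)
    (hweak : ∀ g : Ω → ℝ, MemLp g 2 μ →
      Tendsto (fun k : ℕ => ∫ ω, p k ω * g ω ∂μ) atTop (nhds (∫ ω, plim ω * g ω ∂μ)))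
    (hstrong : Tendsto
      (fun k : ℕ => ∫ ω, (p k ω ^ ((k : ℝ) / ((k : ℝ) - 1)) - χ ω) ^ 2 ∂μ)
      atTop (nhds 0)) :
    (∀ᵐ ω ∂μ, χ ω = plim ω) ∧
    Tendsto (fun k : ℕ => ∫ ω, (p k ω - plim ω) ^ 2 ∂μ) atTop (nhds 0) :=
  pressure_strong_compactness_general μ pM C p plim χ hpbdd hpL1 hpint hplim hχ hweak hstrong
end

section
/- Let Ω ⊂ ℝ be a compact set, T > 0, and Q_T = (0,T) × Ω equipped with Lebesgue measure. Let (u_n) be a sequence of essentially bounded measurable functions on Q_T and (f_n) a sequence of continuous functions on ℝ such that: (i) u_n → u weakly in L²(Q_T); (ii) each f_n is nondecreasing; (iii) f_n → f uniformly on compact subsets of ℝ; (iv) f_n ∘ u_n → χ strongly in L²(Q_T). Then χ = f(u) almost everywhere in Q_T. -/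
open MeasureTheory Filter Topology
open scoped InnerProductSpace

/-! Minty's trick. For every level `v`, monotonicity of `f n` makes
`(f n (u n) - f n v) * (u n - v)` pointwise nonnegative. Its integral over any measurable set is
an `L²` pairing of a strongly convergent sequence with a weakly convergent one, so it passes to
the limit, giving `(χ - f v) * (u - v) ≥ 0` a.e. Taking all rational `v` at once, continuity of
`f` squeezes `χ` to `f u`. -/

section Hilbert

variable {E : Type*} [NormedAddCommGroup E] [InnerProductSpace ℝ E] [CompleteSpace E]

theorem exists_norm_le_of_forall_tendsto_inner {y : ℕ → E} {y₀ : E}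
    (hy : ∀ z, Tendsto (fun n => ⟪y n, z⟫_ℝ) atTop (𝓝 ⟪y₀, z⟫_ℝ)) :
    ∃ C, ∀ n, ‖y n‖ ≤ C := by
  have hbdd : ∀ z, ∃ C, ∀ n, ‖innerSL ℝ (y n) z‖ ≤ C := fun z => by
    obtain ⟨C, hC⟩ := (hy z).norm.bddAbove_range
    exact ⟨C, fun n => hC (Set.mem_range_self n)⟩
  obtain ⟨C, hC⟩ := banach_steinhaus hbdd
  exact ⟨C, fun n => (innerSL_apply_norm ℝ (y n)).symm.trans_le (hC n)⟩

theorem tendsto_inner_of_tendsto_of_forall_tendsto_inner {x y : ℕ → E} {x₀ y₀ : E}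
    (hx : Tendsto x atTop (𝓝 x₀))
    (hy : ∀ z, Tendsto (fun n => ⟪y n, z⟫_ℝ) atTop (𝓝 ⟪y₀, z⟫_ℝ)) :
    Tendsto (fun n => ⟪x n, y n⟫_ℝ) atTop (𝓝 ⟪x₀, y₀⟫_ℝ) := by
  obtain ⟨C, hC⟩ := exists_norm_le_of_forall_tendsto_inner hy
  have hsmall : Tendsto (fun n => ⟪x n - x₀, y n⟫_ℝ) atTop (𝓝 0) := by
    refine squeeze_zero_norm (fun n => (norm_inner_le_norm _ _).trans
      (mul_le_mul_of_nonneg_left (hC n) (norm_nonneg _))) ?_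
    simpa using (tendsto_iff_norm_sub_tendsto_zero.1 hx).mul_const C
  have hmain : Tendsto (fun n => ⟪x₀, y n⟫_ℝ) atTop (𝓝 ⟪x₀, y₀⟫_ℝ) := by
    simpa only [real_inner_comm x₀] using hy x₀
  simpa [inner_sub_left] using hsmall.add hmain

end Hilbert

section L2

variable {α : Type*} [MeasurableSpace α] {μ : Measure α} {u : ℕ → α → ℝ} {ulim χ : α → ℝ}
  {f : ℕ → ℝ → ℝ} {v c : ℝ}

theorem memLp_comp_of_ae_abs_le [IsFiniteMeasure μ] {p : ENNReal} {g : α → ℝ} {φ : ℝ → ℝ}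
    (hφ : Continuous φ) (hg : AEStronglyMeasurable g μ) {M : ℝ} (hM : ∀ᵐ q ∂μ, |g q| ≤ M) :
    MemLp (fun q => φ (g q)) p μ := by
  obtain ⟨C, hC⟩ :=
    (isCompact_Icc (a := -M) (b := M)).exists_bound_of_continuousOn hφ.continuousOn
  refine MemLp.of_bound (hφ.comp_aestronglyMeasurable hg) C ?_
  filter_upwards [hM] with q hq using hC (g q) (abs_le.mp hq)

def TendstoWeaklyInL2 (μ : Measure α) (u : ℕ → α → ℝ) (ulim : α → ℝ) : Prop :=
  ∀ g, MemLp g 2 μ → Tendsto (fun n => ∫ q, u n q * g q ∂μ) atTop (𝓝 (∫ q, ulim q * g q ∂μ))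

def TendstoInL2 (μ : Measure α) (u : ℕ → α → ℝ) (ulim : α → ℝ) : Prop :=
  Tendsto (fun n => ∫ q, (u n q - ulim q) ^ 2 ∂μ) atTop (𝓝 0)

theorem L2.inner_eq_integral_mul_of_ae_eq {x y : Lp ℝ 2 μ} {a b : α → ℝ}
    (ha : x =ᵐ[μ] a) (hb : y =ᵐ[μ] b) : ⟪x, y⟫_ℝ = ∫ q, a q * b q ∂μ := by
  rw [L2.inner_def]
  refine integral_congr_ae ?_
  filter_upwards [ha, hb] with q hqa hqb
  simp [hqa, hqb, mul_comm]

theorem MemLp.coeFn_toLp_sub_const [IsFiniteMeasure μ] {F : α → ℝ} (hF : MemLp F 2 μ) (a : ℝ) :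
    hF.toLp F - Lp.const 2 μ a =ᵐ[μ] fun q => F q - a := by
  filter_upwards [Lp.coeFn_sub (hF.toLp F) (Lp.const 2 μ a), hF.coeFn_toLp, Lp.coeFn_const 2 μ a]
    with q hsub htoLp hconst
  rw [hsub, Pi.sub_apply, htoLp, hconst, Function.const_apply]

theorem TendstoInL2.tendsto_toLp (hu : ∀ n, MemLp (u n) 2 μ)
    (hulim : MemLp ulim 2 μ) (h : TendstoInL2 μ u ulim) :
    Tendsto (fun n => (hu n).toLp (u n)) atTop (𝓝 (hulim.toLp ulim)) := by
  rw [tendsto_iff_norm_sub_tendsto_zero]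
  have hnorm : ∀ n,
      ‖(hu n).toLp (u n) - hulim.toLp ulim‖ = √(∫ q, (u n q - ulim q) ^ 2 ∂μ) := by
    intro n
    rw [norm_eq_sqrt_real_inner, ← MemLp.toLp_sub]
    congr 1
    simp_rw [sq]
    exact L2.inner_eq_integral_mul_of_ae_eq (MemLp.coeFn_toLp _) (MemLp.coeFn_toLp _)
  simpa [hnorm] using h.sqrt

theorem TendstoWeaklyInL2.tendsto_inner_toLp (hu : ∀ n, MemLp (u n) 2 μ)
    (hulim : MemLp ulim 2 μ) (h : TendstoWeaklyInL2 μ u ulim) (z : Lp ℝ 2 μ) :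
    Tendsto (fun n => ⟪(hu n).toLp (u n), z⟫_ℝ) atTop (𝓝 ⟪hulim.toLp ulim, z⟫_ℝ) := by
  simpa only [L2.inner_eq_integral_mul_of_ae_eq (MemLp.coeFn_toLp _) (ae_eq_refl z)]
    using h z (Lp.memLp z)

theorem TendstoWeaklyInL2.restrict (h : TendstoWeaklyInL2 μ u ulim)
    {s : Set α} (hs : MeasurableSet s) : TendstoWeaklyInL2 (μ.restrict s) u ulim := by
  intro g hg
  have hind : ∀ w : α → ℝ, ∫ q, w q * g q ∂μ.restrict s = ∫ q, w q * s.indicator g q ∂μ := by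
    intro w
    rw [← integral_indicator hs]
    congr 1
    ext q
    by_cases hq : q ∈ s <;> simp [hq]
  simpa only [hind] using h _ ((memLp_indicator_iff_restrict hs).2 hg)

theorem TendstoInL2.restrict (hu : ∀ n, MemLp (u n) 2 μ)
    (hulim : MemLp ulim 2 μ) (h : TendstoInL2 μ u ulim) (s : Set α) :
    TendstoInL2 (μ.restrict s) u ulim := by
  refine squeeze_zero (fun n => integral_nonneg fun q => sq_nonneg _)
    (fun n => setIntegral_le_integral ((hu n).sub hulim).integrable_sq
      (ae_of_all _ fun q => sq_nonneg _)) h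

theorem integral_mul_sub_nonneg_of_monotone [IsFiniteMeasure μ] (hu : ∀ n, MemLp (u n) 2 μ)
    (hfu : ∀ n, MemLp (fun q => f n (u n q)) 2 μ) (hulim : MemLp ulim 2 μ) (hχ : MemLp χ 2 μ)
    (hweak : TendstoWeaklyInL2 μ u ulim) (hstrong : TendstoInL2 μ (fun n q => f n (u n q)) χ)
    (hmono : ∀ n, Monotone (f n)) (hv : Tendsto (fun n => f n v) atTop (𝓝 c)) :
    0 ≤ ∫ q, (χ q - c) * (ulim q - v) ∂μ := by
  set K : ℝ →L[ℝ] Lp ℝ 2 μ := Lp.constL 2 μ ℝ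
  have hpair : ∀ {F U : α → ℝ} (hF : MemLp F 2 μ) (hU : MemLp U 2 μ) (a b : ℝ),
      ⟪hF.toLp F - K a, hU.toLp U - K b⟫_ℝ = ∫ q, (F q - a) * (U q - b) ∂μ :=
    fun hF hU a b => L2.inner_eq_integral_mul_of_ae_eq
      (MemLp.coeFn_toLp_sub_const hF a) (MemLp.coeFn_toLp_sub_const hU b)
  have hy : ∀ z, Tendsto (fun n => ⟪(hu n).toLp (u n) - K v, z⟫_ℝ) atTop
      (𝓝 ⟪hulim.toLp ulim - K v, z⟫_ℝ) := fun z => by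
    simpa only [inner_sub_left] using (hweak.tendsto_inner_toLp hu hulim z).sub_const ⟪K v, z⟫_ℝ
  have hlim := tendsto_inner_of_tendsto_of_forall_tendsto_inner
    ((hstrong.tendsto_toLp hfu hχ).sub (K.continuous.tendsto c |>.comp hv)) hy
  rw [← hpair hχ hulim]
  refine ge_of_tendsto hlim (Eventually.of_forall fun n => ?_)
  rw [Function.comp_apply, hpair (hfu n) (hu n)]
  refine integral_nonneg fun q => ?_
  rcases le_total v (u n q) with h | h
  · exact mul_nonneg (sub_nonneg.2 (hmono n h)) (sub_nonneg.2 h)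
  · exact mul_nonneg_of_nonpos_of_nonpos (sub_nonpos.2 (hmono n h)) (sub_nonpos.2 h)

theorem ae_mul_sub_nonneg_of_monotone [IsFiniteMeasure μ] (hu : ∀ n, MemLp (u n) 2 μ)
    (hfu : ∀ n, MemLp (fun q => f n (u n q)) 2 μ) (hulim : MemLp ulim 2 μ) (hχ : MemLp χ 2 μ)
    (hweak : TendstoWeaklyInL2 μ u ulim) (hstrong : TendstoInL2 μ (fun n q => f n (u n q)) χ)
    (hmono : ∀ n, Monotone (f n)) (hv : Tendsto (fun n => f n v) atTop (𝓝 c)) :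
    ∀ᵐ q ∂μ, 0 ≤ (χ q - c) * (ulim q - v) :=
  ae_nonneg_of_forall_setIntegral_nonneg
    ((hχ.sub (memLp_const c)).integrable_mul (hulim.sub (memLp_const v))) fun s hs _ =>
    integral_mul_sub_nonneg_of_monotone (fun n => (hu n).restrict s) (fun n => (hfu n).restrict s)
      (hulim.restrict s) (hχ.restrict s) (hweak.restrict hs) (hstrong.restrict hfu hχ s) hmono hv

end L2

theorem eq_of_forall_rat_mul_sub_nonneg {φ : ℝ → ℝ} (hφ : Continuous φ) {x y : ℝ}
    (h : ∀ v : ℚ, 0 ≤ (y - φ v) * (x - v)) : y = φ x := by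
  have hreal (v : ℝ) : 0 ≤ (y - φ v) * (x - v) :=
    Rat.denseRange_cast.induction_on v (isClosed_le continuous_const (by fun_prop)) h
  have hφx := hφ.tendsto x
  apply le_antisymm
  · refine ge_of_tendsto (hφx.mono_left (nhdsWithin_le_nhds (s := Set.Ioi x)))
      (eventually_nhdsWithin_of_forall fun v (hv : x < v) => ?_)
    exact sub_nonneg.1 (nonneg_of_mul_nonneg_left (by linear_combination hreal v) (sub_pos.2 hv))
  · refine le_of_tendsto (hφx.mono_left (nhdsWithin_le_nhds (s := Set.Iio x)))
      (eventually_nhdsWithin_of_forall fun v (hv : v < x) => ?_)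
    exact sub_nonneg.1 (nonneg_of_mul_nonneg_left (hreal v) (sub_pos.2 hv))

theorem lemmaA_identify_nonlinear_weak_limit_general
    (Ω : Set ℝ) (hΩ : IsCompact Ω) (T : ℝ)
    (μ : Measure (ℝ × ℝ)) (hμ : μ = (volume : Measure (ℝ × ℝ)).restrict (Set.Ioo 0 T ×ˢ Ω))
    (u : ℕ → ℝ × ℝ → ℝ) (ulim χ : ℝ × ℝ → ℝ) (f : ℕ → ℝ → ℝ) (flim : ℝ → ℝ)
    (humeas : ∀ n, Measurable (u n))
    (hubdd : ∀ n, ∃ M : ℝ, ∀ᵐ q ∂μ, |u n q| ≤ M)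
    (hulim : MemLp ulim 2 μ) (hχ : MemLp χ 2 μ)
    (hweak : ∀ g : ℝ × ℝ → ℝ, MemLp g 2 μ →
      Tendsto (fun n : ℕ => ∫ q, u n q * g q ∂μ) atTop (nhds (∫ q, ulim q * g q ∂μ)))
    (hfcont : ∀ n, Continuous (f n))
    (hfmono : ∀ n, Monotone (f n))
    (hfunif : ∀ K : Set ℝ, IsCompact K → TendstoUniformlyOn f flim atTop K)
    (hstrong : Tendsto (fun n : ℕ => ∫ q, (f n (u n q) - χ q) ^ 2 ∂μ) atTop (nhds 0)) :
    ∀ᵐ q ∂μ, χ q = flim (ulim q) := by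
  have : IsFiniteMeasure μ := ⟨by
    rw [hμ, Measure.restrict_apply_univ]
    exact ((Metric.isBounded_Ioo 0 T).prod hΩ.isBounded).measure_lt_top⟩
  choose M hM using hubdd
  have hu : ∀ n, MemLp (u n) 2 μ := fun n =>
    memLp_comp_of_ae_abs_le continuous_id (humeas n).aestronglyMeasurable (hM n)
  have hfu : ∀ n, MemLp (fun q => f n (u n q)) 2 μ := fun n =>
    memLp_comp_of_ae_abs_le (hfcont n) (humeas n).aestronglyMeasurable (hM n)
  have hflim : Continuous flim :=
    (tendstoLocallyUniformly_iff_forall_isCompact.2 hfunif).continuous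
      (Eventually.of_forall hfcont).frequently
  have hminty : ∀ v : ℚ, ∀ᵐ q ∂μ, 0 ≤ (χ q - flim v) * (ulim q - v) := fun v =>
    ae_mul_sub_nonneg_of_monotone hu hfu hulim hχ hweak hstrong hfmono
      ((hfunif {(v : ℝ)} isCompact_singleton).tendsto_at rfl)
  filter_upwards [ae_all_iff.2 hminty] with q hq using eq_of_forall_rat_mul_sub_nonneg hflim hq

/-- "Lemma A" of Hilhorst–van der Hout–Peletier: on `Q_T = (0,T) × Ω` with
`Ω ⊂ ℝ` compact, if `u_n ⇀ u` weakly in `L²(Q_T)`, each `f_n` is a nondecreasing continuous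
function on `ℝ`, `f_n → f` uniformly on compact subsets of `ℝ`, and `f_n ∘ u_n → χ` strongly
in `L²(Q_T)`, then `χ = f(u)` a.e. in `Q_T`. -/
theorem lemmaA_identify_nonlinear_weak_limit
    (Ω : Set ℝ) (hΩ : IsCompact Ω) (T : ℝ) (hT : 0 < T)
    (μ : Measure (ℝ × ℝ)) (hμ : μ = (volume : Measure (ℝ × ℝ)).restrict (Set.Ioo 0 T ×ˢ Ω))
    (u : ℕ → ℝ × ℝ → ℝ) (ulim χ : ℝ × ℝ → ℝ) (f : ℕ → ℝ → ℝ) (flim : ℝ → ℝ)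
    (humeas : ∀ n, Measurable (u n))
    (hubdd : ∀ n, ∃ M : ℝ, ∀ᵐ q ∂μ, |u n q| ≤ M)
    (hulim : MemLp ulim 2 μ) (hχ : MemLp χ 2 μ)
    (hweak : ∀ g : ℝ × ℝ → ℝ, MemLp g 2 μ →
      Tendsto (fun n : ℕ => ∫ q, u n q * g q ∂μ) atTop (nhds (∫ q, ulim q * g q ∂μ)))
    (hfcont : ∀ n, Continuous (f n))
    (hfmono : ∀ n, Monotone (f n))
    (hfunif : ∀ K : Set ℝ, IsCompact K → TendstoUniformlyOn f flim atTop K)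
    (hstrong : Tendsto (fun n : ℕ => ∫ q, (f n (u n q) - χ q) ^ 2 ∂μ) atTop (nhds 0)) :
    ∀ᵐ q ∂μ, χ q = flim (ulim q) :=
  lemmaA_identify_nonlinear_weak_limit_general Ω hΩ T μ hμ u ulim χ f flim humeas hubdd hulim hχ
    hweak hfcont hfmono hfunif hstrong
end
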